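/- Let $p > 1$, $m, \beta \in \mathbb{R}$ with $\frac{m+1}{p} > 1 - \beta$, and let $f \in L^p((0,\infty); y^m\,dy)$. Define $(H_2 f)(y) = y^{\beta-1} \int_y^\infty f(s) s^{-\beta}\,ds$. Then $\|H_2 f\|_{L^p((0,\infty); y^m dy)} \le C \|f\|_{L^p((0,\infty); y^m dy)}$ with $C = \left|\frac{m+1}{p} - (1-\beta)\right|^{-1}$. -/

import Mathlib

open MeasureTheory Filter
open scoped ENNReal

/-- The weighted measure `y^m dy` on `(0,∞)`. -/
noncomputable def wm (m : ℝ) : Measure ℝ :=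
  (volume.restrict (Set.Ioi 0)).withDensity fun y => ENNReal.ofReal (y ^ m)

/-!
Write `α = (m+1)/p - (1-β) > 0` and `q` for the conjugate exponent of `p`. For `y > 0`, Hölder's
inequality applied to `g(s) s^{-β} = (g(s) s^{ε-β}) · s^{-ε}` on `(y, ∞)`, with `ε q = 1 + α`, gives
`(∫_y^∞ g s^{-β})^p ≤ (α⁻¹ y^{-α})^{p-1} ∫_y^∞ g^p s^{m-α}`. Multiplying by `y^{m+(β-1)p}` leaves the
weight `α^{1-p} y^{α-1}`, and exchanging the order of integration turns `∫_0^s y^{α-1} dy = s^α/α`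
back into the weight `s^m`, with total constant `α^{-p}`.
-/

open Set

section PowerIntegrals

variable {γ : ℝ}

theorem ENNReal.ofReal_rpow_mul_ofReal_rpow {y : ℝ} (hy : 0 < y) (a b : ℝ) :
    ENNReal.ofReal (y ^ a) * ENNReal.ofReal (y ^ b) = ENNReal.ofReal (y ^ (a + b)) := by
  rw [← ENNReal.ofReal_mul (Real.rpow_nonneg hy.le _), ← Real.rpow_add hy]

theorem ENNReal.ofReal_rpow_rpow {y : ℝ} (hy : 0 < y) (a r : ℝ) :
    ENNReal.ofReal (y ^ a) ^ r = ENNReal.ofReal (y ^ (a * r)) := by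
  rw [ENNReal.ofReal_rpow_of_pos (Real.rpow_pos_of_pos hy _), ← Real.rpow_mul hy.le]

theorem lintegral_Ioo_rpow_sub_one (hγ : 0 < γ) {s : ℝ} (hs : 0 < s) :
    ∫⁻ y in Ioo 0 s, ENNReal.ofReal (y ^ (γ - 1)) = ENNReal.ofReal (s ^ γ / γ) := by
  have hint : IntegrableOn (fun y : ℝ => y ^ (γ - 1)) (Ioo 0 s) :=
    (intervalIntegral.intervalIntegrable_rpow' (by linarith)).1.mono_set Ioo_subset_Ioc_self
  rw [← ofReal_integral_eq_lintegral_ofReal hint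
    ((ae_restrict_iff' measurableSet_Ioo).2 (ae_of_all _ fun y hy => Real.rpow_nonneg hy.1.le _)),
    ← integral_Ioc_eq_integral_Ioo, ← intervalIntegral.integral_of_le hs.le,
    integral_rpow (Or.inl (by linarith)), sub_add_cancel, Real.zero_rpow hγ.ne', sub_zero]

theorem lintegral_Ioi_rpow_neg_sub_one (hγ : 0 < γ) {c : ℝ} (hc : 0 < c) :
    ∫⁻ s in Ioi c, ENNReal.ofReal (s ^ (-γ - 1)) = ENNReal.ofReal (c ^ (-γ) / γ) := by
  rw [← ofReal_integral_eq_lintegral_ofReal (integrableOn_Ioi_rpow_of_lt (by linarith) hc)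
    ((ae_restrict_iff' measurableSet_Ioi).2 (ae_of_all _ fun s hs =>
      Real.rpow_nonneg (hc.trans hs).le _)), integral_Ioi_rpow_of_lt (by linarith) hc,
    sub_add_cancel, neg_div_neg_eq]

theorem lintegral_rpow_sub_one_mul_lintegral_Ioi (hγ : 0 < γ) {K : ℝ → ℝ≥0∞}
    (hK : Measurable K) :
    ∫⁻ y in Ioi 0, ENNReal.ofReal (y ^ (γ - 1)) * ∫⁻ s in Ioi y, K s
      = ∫⁻ s in Ioi 0, K s * ENNReal.ofReal (s ^ γ / γ) := by
  set F : ℝ → ℝ → ℝ≥0∞ := fun y s =>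
    (Ioi y).indicator (fun s => ENNReal.ofReal (y ^ (γ - 1)) * K s) s
  have hF : Measurable (Function.uncurry F) :=
    (((measurable_fst.pow_const _).ennreal_ofReal).mul (hK.comp measurable_snd)).indicator
      (measurableSet_lt measurable_fst measurable_snd)
  have h_inner_s : ∀ y ∈ Ioi (0 : ℝ),
      ENNReal.ofReal (y ^ (γ - 1)) * ∫⁻ s in Ioi y, K s = ∫⁻ s in Ioi 0, F y s := fun y hy => by
    rw [lintegral_indicator measurableSet_Ioi, Measure.restrict_restrict measurableSet_Ioi,
      Ioi_inter_Ioi, sup_eq_left.2 (le_of_lt hy), lintegral_const_mul' _ _ ENNReal.ofReal_ne_top]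
  have h_inner_y : ∀ s ∈ Ioi (0 : ℝ),
      ∫⁻ y in Ioi 0, F y s = K s * ENNReal.ofReal (s ^ γ / γ) := fun s hs => by
    calc ∫⁻ y in Ioi 0, F y s
        = ∫⁻ y in Ioi 0, (Iio s).indicator (fun y => ENNReal.ofReal (y ^ (γ - 1))) y * K s := by
          refine lintegral_congr fun y => ?_
          by_cases hys : y < s <;> simp [F, indicator_apply, hys]
      _ = K s * ENNReal.ofReal (s ^ γ / γ) := by
          rw [lintegral_mul_const _ ((measurable_id'.pow_const _).ennreal_ofReal.indicator
            measurableSet_Iio), lintegral_indicator measurableSet_Iio,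
            Measure.restrict_restrict measurableSet_Iio, Iio_inter_Ioi,
            lintegral_Ioo_rpow_sub_one hγ hs, mul_comm]
  rw [setLIntegral_congr_fun measurableSet_Ioi h_inner_s, lintegral_lintegral_swap hF.aemeasurable,
    setLIntegral_congr_fun measurableSet_Ioi h_inner_y]

end PowerIntegrals

section Hardy

variable {p m β : ℝ} {g : ℝ → ℝ≥0∞}

theorem lintegral_Ioi_mul_rpow_neg_le {q ε γ y : ℝ} (hpq : p.HolderConjugate q)
    (hεq : ε * q = 1 + γ) (hγ : 0 < γ) (hy : 0 < y) (hg : Measurable g) :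
    ∫⁻ s in Ioi y, g s * ENNReal.ofReal (s ^ (-β))
      ≤ (∫⁻ s in Ioi y, g s ^ p * ENNReal.ofReal (s ^ ((ε - β) * p))) ^ (1 / p)
        * ENNReal.ofReal (y ^ (-γ) / γ) ^ (1 / q) := by
  have hsplit : ∀ s ∈ Ioi y, g s * ENNReal.ofReal (s ^ (-β))
      = ((fun s => g s * ENNReal.ofReal (s ^ (ε - β))) * fun s => ENNReal.ofReal (s ^ (-ε))) s :=
    fun s hs => by
      rw [Pi.mul_apply, mul_assoc, ENNReal.ofReal_rpow_mul_ofReal_rpow (hy.trans hs)]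
      ring_nf
  have hfirst : ∀ s ∈ Ioi y, (g s * ENNReal.ofReal (s ^ (ε - β))) ^ p
      = g s ^ p * ENNReal.ofReal (s ^ ((ε - β) * p)) := fun s hs => by
    rw [ENNReal.mul_rpow_of_nonneg _ _ hpq.nonneg, ENNReal.ofReal_rpow_rpow (hy.trans hs)]
  have hsecond : ∀ s ∈ Ioi y, ENNReal.ofReal (s ^ (-ε)) ^ q = ENNReal.ofReal (s ^ (-γ - 1)) :=
    fun s hs => by
      rw [ENNReal.ofReal_rpow_rpow (hy.trans hs), neg_mul, hεq]
      ring_nf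
  calc ∫⁻ s in Ioi y, g s * ENNReal.ofReal (s ^ (-β))
      = ∫⁻ s in Ioi y, ((fun s => g s * ENNReal.ofReal (s ^ (ε - β))) *
          fun s => ENNReal.ofReal (s ^ (-ε))) s := setLIntegral_congr_fun measurableSet_Ioi hsplit
    _ ≤ _ := ENNReal.lintegral_mul_le_Lp_mul_Lq _ hpq
        (hg.mul (measurable_id'.pow_const _).ennreal_ofReal).aemeasurable
        (measurable_id'.pow_const _).ennreal_ofReal.aemeasurable
    _ = _ := by
      rw [setLIntegral_congr_fun measurableSet_Ioi hfirst,
        setLIntegral_congr_fun measurableSet_Ioi hsecond, lintegral_Ioi_rpow_neg_sub_one hγ hy]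

theorem rpow_mul_lintegral_Ioi_rpow_le {α y : ℝ} (hp : 1 < p) (hα : (m + 1) / p - (1 - β) = α)
    (hα0 : 0 < α) (hg : Measurable g) (hy : 0 < y) :
    ENNReal.ofReal (y ^ m) *
        (ENNReal.ofReal (y ^ (β - 1)) * ∫⁻ s in Ioi y, g s * ENNReal.ofReal (s ^ (-β))) ^ p
      ≤ ENNReal.ofReal α⁻¹ ^ (p - 1) *
        (ENNReal.ofReal (y ^ (α - 1)) * ∫⁻ s in Ioi y, g s ^ p * ENNReal.ofReal (s ^ (m - α))) := by
  have hpq := Real.HolderConjugate.conjExponent hp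
  set q := p.conjExponent
  have hp0 := hpq.pos
  have hεq : (1 + α) / q * q = 1 + α := div_mul_cancel₀ _ hpq.symm.ne_zero
  have hexp : ((1 + α) / q - β) * p = m - α := by
    rw [hpq.conjugate_eq, ← hα]
    field_simp [hpq.sub_one_ne_zero]
    ring
  have hZ : ENNReal.ofReal (y ^ (-α) / α) ^ (1 / q * p)
      = ENNReal.ofReal α⁻¹ ^ (p - 1) * ENNReal.ofReal (y ^ (-α * (p - 1))) := by
    rw [one_div_mul_eq_div, hpq.div_conj_eq_sub_one, div_eq_mul_inv,
      ENNReal.ofReal_mul (Real.rpow_nonneg hy.le _),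
      ENNReal.mul_rpow_of_nonneg _ _ hpq.sub_one_pos.le, ENNReal.ofReal_rpow_rpow hy, mul_comm]
  have hweight : ENNReal.ofReal (y ^ m) *
      (ENNReal.ofReal (y ^ ((β - 1) * p)) * ENNReal.ofReal (y ^ (-α * (p - 1))))
      = ENNReal.ofReal (y ^ (α - 1)) := by
    rw [ENNReal.ofReal_rpow_mul_ofReal_rpow hy, ENNReal.ofReal_rpow_mul_ofReal_rpow hy, ← hα]
    congr 2
    field_simp
    ring
  calc _ ≤ ENNReal.ofReal (y ^ m) * (ENNReal.ofReal (y ^ (β - 1)) *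
        ((∫⁻ s in Ioi y, g s ^ p * ENNReal.ofReal (s ^ (((1 + α) / q - β) * p))) ^ (1 / p)
          * ENNReal.ofReal (y ^ (-α) / α) ^ (1 / q))) ^ p := by
        gcongr
        exact lintegral_Ioi_mul_rpow_neg_le hpq hεq hα0 hy hg
    _ = _ := by
        rw [ENNReal.mul_rpow_of_nonneg _ _ hp0.le, ENNReal.mul_rpow_of_nonneg _ _ hp0.le,
          ← ENNReal.rpow_mul, ← ENNReal.rpow_mul, one_div_mul_cancel hp0.ne', ENNReal.rpow_one, hZ,
          ENNReal.ofReal_rpow_rpow hy, hexp, ← hweight]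
        ring

theorem lintegral_hardy_tail_le {α : ℝ} (hp : 1 < p)
    (hα : (m + 1) / p - (1 - β) = α) (hα0 : 0 < α) (hg : Measurable g) :
    ∫⁻ y in Ioi 0, ENNReal.ofReal (y ^ m) *
        (ENNReal.ofReal (y ^ (β - 1)) * ∫⁻ s in Ioi y, g s * ENNReal.ofReal (s ^ (-β))) ^ p
      ≤ ENNReal.ofReal α⁻¹ ^ p * ∫⁻ s in Ioi 0, ENNReal.ofReal (s ^ m) * g s ^ p := by
  have hK : Measurable fun s => g s ^ p * ENNReal.ofReal (s ^ (m - α)) :=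
    (hg.pow_const p).mul (measurable_id'.pow_const _).ennreal_ofReal
  have hweight : ∀ s ∈ Ioi (0 : ℝ), g s ^ p * ENNReal.ofReal (s ^ (m - α)) *
      ENNReal.ofReal (s ^ α / α) = ENNReal.ofReal α⁻¹ * (ENNReal.ofReal (s ^ m) * g s ^ p) :=
    fun s hs => by
      rw [div_eq_mul_inv, ENNReal.ofReal_mul (Real.rpow_nonneg (le_of_lt hs) _), ← mul_assoc,
        mul_assoc (g s ^ p), ENNReal.ofReal_rpow_mul_ofReal_rpow hs, sub_add_cancel]
      ring
  have hconst : ENNReal.ofReal α⁻¹ ^ (p - 1) * ENNReal.ofReal α⁻¹ = ENNReal.ofReal α⁻¹ ^ p := by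
    simpa using (ENNReal.rpow_add_of_add_pos ENNReal.ofReal_ne_top (p - 1) 1 (by linarith)).symm
  calc _ ≤ ∫⁻ y in Ioi 0, ENNReal.ofReal α⁻¹ ^ (p - 1) *
        (ENNReal.ofReal (y ^ (α - 1)) * ∫⁻ s in Ioi y, g s ^ p * ENNReal.ofReal (s ^ (m - α))) :=
        setLIntegral_mono' measurableSet_Ioi fun y hy =>
          rpow_mul_lintegral_Ioi_rpow_le hp hα hα0 hg hy
    _ = ENNReal.ofReal α⁻¹ ^ (p - 1) * ∫⁻ s in Ioi 0, ENNReal.ofReal α⁻¹ *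
          (ENNReal.ofReal (s ^ m) * g s ^ p) := by
        rw [lintegral_const_mul' _ _ (by finiteness),
          lintegral_rpow_sub_one_mul_lintegral_Ioi hα0 hK, setLIntegral_congr_fun measurableSet_Ioi hweight]
    _ = _ := by
        rw [lintegral_const_mul' _ _ ENNReal.ofReal_ne_top, ← mul_assoc, hconst]

theorem lintegral_hardy_tail_le_of_aemeasurable {α : ℝ} (hp : 1 < p)
    (hα : (m + 1) / p - (1 - β) = α) (hα0 : 0 < α)
    (hg : AEMeasurable g (volume.restrict (Ioi 0))) :
    ∫⁻ y in Ioi 0, ENNReal.ofReal (y ^ m) *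
        (ENNReal.ofReal (y ^ (β - 1)) * ∫⁻ s in Ioi y, g s * ENNReal.ofReal (s ^ (-β))) ^ p
      ≤ ENNReal.ofReal α⁻¹ ^ p * ∫⁻ s in Ioi 0, ENNReal.ofReal (s ^ m) * g s ^ p := by
  have htail : ∀ y ∈ Ioi (0 : ℝ), ∫⁻ s in Ioi y, g s * ENNReal.ofReal (s ^ (-β))
      = ∫⁻ s in Ioi y, hg.mk g s * ENNReal.ofReal (s ^ (-β)) := fun y hy =>
    lintegral_congr_ae <| (ae_restrict_of_ae_restrict_of_subset (Ioi_subset_Ioi (le_of_lt hy))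
      hg.ae_eq_mk).mono fun s hs => by simp only [hs]
  calc _ = ∫⁻ y in Ioi 0, ENNReal.ofReal (y ^ m) *
        (ENNReal.ofReal (y ^ (β - 1)) * ∫⁻ s in Ioi y, hg.mk g s * ENNReal.ofReal (s ^ (-β))) ^ p :=
        setLIntegral_congr_fun measurableSet_Ioi fun y hy => by rw [htail y hy]
    _ ≤ ENNReal.ofReal α⁻¹ ^ p * ∫⁻ s in Ioi 0, ENNReal.ofReal (s ^ m) * hg.mk g s ^ p :=
        lintegral_hardy_tail_le hp hα hα0 hg.measurable_mk
    _ = _ := by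
        congr 1
        exact lintegral_congr_ae <| hg.ae_eq_mk.mono fun s hs => by simp only [hs]

end Hardy

theorem enorm_rpow_mul_integral_Ioi_le {f : ℝ → ℝ} {β y : ℝ} (hy : 0 < y) :
    ‖y ^ (β - 1) * ∫ s in Ioi y, f s * s ^ (-β)‖ₑ
      ≤ ENNReal.ofReal (y ^ (β - 1)) * ∫⁻ s in Ioi y, ‖f s‖ₑ * ENNReal.ofReal (s ^ (-β)) := by
  rw [enorm_mul, Real.enorm_of_nonneg (Real.rpow_nonneg hy.le _)]
  gcongr
  refine (enorm_integral_le_lintegral_enorm _).trans_eq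
    (setLIntegral_congr_fun measurableSet_Ioi fun s hs => ?_)
  rw [enorm_mul, Real.enorm_of_nonneg (Real.rpow_nonneg (hy.trans hs).le _)]

theorem restrict_Ioi_absolutelyContinuous_wm (m : ℝ) : volume.restrict (Ioi 0) ≪ wm m :=
  withDensity_absolutelyContinuous' (measurable_id'.pow_const m).ennreal_ofReal.aemeasurable <|
    (ae_restrict_iff' measurableSet_Ioi).2 <| ae_of_all _ fun y hy => by
      simpa using Real.rpow_pos_of_pos hy m

theorem lintegral_wm (m : ℝ) (u : ℝ → ℝ≥0∞) :
    ∫⁻ y, u y ∂wm m = ∫⁻ y in Ioi 0, ENNReal.ofReal (y ^ m) * u y :=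
  lintegral_withDensity_eq_lintegral_mul_non_measurable _
    (measurable_id'.pow_const m).ennreal_ofReal (ae_of_all _ fun _ => ENNReal.ofReal_lt_top) u

theorem eLpNorm_wm {E : Type*} [ENorm E] {m p : ℝ} (hp : 0 < p) (f : ℝ → E) :
    eLpNorm f (ENNReal.ofReal p) (wm m)
      = (∫⁻ y in Ioi 0, ENNReal.ofReal (y ^ m) * ‖f y‖ₑ ^ p) ^ (1 / p) := by
  rw [eLpNorm_eq_lintegral_rpow_enorm_toReal (by simpa using hp) ENNReal.ofReal_ne_top,
    ENNReal.toReal_ofReal hp.le, lintegral_wm]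

/-- Weighted Hardy inequality for `(H₂ f)(y) = y^{β-1} ∫_y^∞ f(s) s^{-β} ds`
when `(m+1)/p > 1-β`. -/
theorem stmt5 (p m β : ℝ) (hp : 1 < p) (h : (m + 1) / p > 1 - β)
    (f : ℝ → ℝ) (hf : MemLp f (ENNReal.ofReal p) (wm m)) :
    eLpNorm (fun y => y ^ (β - 1) * ∫ s in Set.Ioi y, f s * s ^ (-β))
        (ENNReal.ofReal p) (wm m) ≤
      ENNReal.ofReal |(m + 1) / p - (1 - β)|⁻¹ * eLpNorm f (ENNReal.ofReal p) (wm m) := by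
  have hp0 : 0 < p := by linarith
  have hα0 : 0 < (m + 1) / p - (1 - β) := sub_pos.2 h
  have hg : AEMeasurable (fun s => ‖f s‖ₑ) (volume.restrict (Ioi 0)) :=
    hf.1.enorm.mono_ac (restrict_Ioi_absolutelyContinuous_wm m)
  rw [eLpNorm_wm hp0, eLpNorm_wm hp0, abs_of_pos hα0]
  calc _ ≤ (ENNReal.ofReal ((m + 1) / p - (1 - β))⁻¹ ^ p *
        ∫⁻ s in Ioi 0, ENNReal.ofReal (s ^ m) * ‖f s‖ₑ ^ p) ^ (1 / p) := by
        gcongr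
        refine (setLIntegral_mono' measurableSet_Ioi fun y hy => ?_).trans
          (lintegral_hardy_tail_le_of_aemeasurable hp rfl hα0 hg)
        gcongr
        exact enorm_rpow_mul_integral_Ioi_le hy
    _ = _ := by
        rw [ENNReal.mul_rpow_of_nonneg _ _ (by positivity), ← ENNReal.rpow_mul,
          mul_one_div_cancel hp0.ne', ENNReal.rpow_one]
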